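/- arXiv:1710.10478 — 5 statements merged into one kernel-verified Lean document; each statement's English description precedes it below -/
import Mathlib

section
/- Suppose Φ is an automorphism of F satisfying: Φ(w) = w; Φ(a_i) ∈ A' for every i ∈ I; and Φ(t) = wᵐ t α for some integer m and some element α ∈ A'. Then Φ and D_w commute in Aut(F), that is, Φ ∘ D_w = D_w ∘ Φ as automorphisms of F. -/
/-- Let `F` be the free group on the basis `{a_i}_{i ∈ I} ∪ {t}`
(realized as `FreeGroup (Option I)`), `A` the subgroup generated by the `a_i`,
`w ∈ A` nontrivial, `A'` the subgroup generated by `A ∪ {t⁻¹ w t}`, and `D_w`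
the Dehn twist automorphism with `D_w (a_i) = a_i` and `D_w t = w t`.
If `Φ` is an automorphism of `F` with `Φ w = w`, `Φ (a_i) ∈ A'` for all `i`,
and `Φ t = wᵐ t α` for some `m : ℤ` and `α ∈ A'`, then `Φ` and `D_w` commute
in `Aut F`. -/
theorem dehn_twist_hnn_commutes
    {I : Type*} [Nonempty I]
    (A : Subgroup (FreeGroup (Option I)))
    (hA : A = Subgroup.closure (Set.range fun i : I => FreeGroup.of (some i)))
    (w : FreeGroup (Option I)) (hwA : w ∈ A) (hw1 : w ≠ 1)
    (A' : Subgroup (FreeGroup (Option I)))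
    (hA' : A' = Subgroup.closure
      ((A : Set (FreeGroup (Option I))) ∪
        {(FreeGroup.of (none : Option I))⁻¹ * w * FreeGroup.of (none : Option I)}))
    (D : FreeGroup (Option I) ≃* FreeGroup (Option I))
    (hDa : ∀ i : I, D (FreeGroup.of (some i)) = FreeGroup.of (some i))
    (hDt : D (FreeGroup.of (none : Option I)) = w * FreeGroup.of (none : Option I))
    (Φ : FreeGroup (Option I) ≃* FreeGroup (Option I))
    (hΦw : Φ w = w)
    (hΦa : ∀ i : I, Φ (FreeGroup.of (some i)) ∈ A')
    (hΦt : ∃ (m : ℤ) (α : FreeGroup (Option I)), α ∈ A' ∧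
      Φ (FreeGroup.of (none : Option I)) = w ^ m * FreeGroup.of (none : Option I) * α) :
    ∀ x : FreeGroup (Option I), Φ (D x) = D (Φ x) := by
  -- D fixes A pointwise
  have hDA : ∀ x ∈ A, D x = x := by
    intro x hx
    rw [hA] at hx
    induction hx using Subgroup.closure_induction with
    | mem x hx => obtain ⟨i, rfl⟩ := hx; exact hDa i
    | one => exact map_one D
    | mul x y _ _ hx hy => rw [map_mul, hx, hy]
    | inv x _ hx => rw [map_inv, hx]
  have hDw : D w = w := hDA w hwA
  -- D fixes A' pointwise
  have hDA' : ∀ x ∈ A', D x = x := by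
    intro x hx
    rw [hA'] at hx
    induction hx using Subgroup.closure_induction with
    | mem x hx =>
      rcases hx with hx | hx
      · exact hDA x hx
      · rw [Set.mem_singleton_iff] at hx
        subst hx
        simp [map_mul, map_inv, hDt, hDw, mul_assoc]
    | one => exact map_one D
    | mul x y _ _ hx hy => rw [map_mul, hx, hy]
    | inv x _ hx => rw [map_inv, hx]
  intro x
  induction x using FreeGroup.induction_on with
  | C1 => simp
  | of i =>
    cases i with
    | none =>
      obtain ⟨m, α, hα, ht⟩ := hΦt
      rw [hDt, map_mul, hΦw, ht, map_mul, map_mul, map_zpow, hDw, hDt, hDA' α hα]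
      group
    | some i =>
      rw [hDa i, hDA' _ (hΦa i)]
  | inv_of i h =>
    rw [map_inv, map_inv, map_inv, map_inv, h]
  | mul x y hx hy =>
    rw [map_mul, map_mul, map_mul, map_mul, hx, hy]
end

section
/- For every nonzero integer n, the automorphism D_wⁿ of F is not an inner automorphism (i.e., there is no g ∈ F with D_wⁿ(x) = g x g⁻¹ for all x ∈ F). Consequently, the image of D_w in the outer automorphism group Out(F) = Aut(F)/Inn(F) has infinite order. -/
namespace DehnAux

open FreeGroup List

variable {α : Type*} [DecidableEq α]

/-- the "no cancellation" relation between adjacent letters -/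
def P : (α × Bool) → (α × Bool) → Prop := fun p q => ¬(p.1 = q.1 ∧ p.2 = !q.2)

lemma chain'_reduce (L : List (α × Bool)) : List.Chain' P (reduce L) := by
  induction L with
  | nil => exact List.isChain_nil
  | cons x M ih =>
    rw [reduce.cons]
    cases h : reduce M with
    | nil => exact List.isChain_singleton x
    | cons hd tl =>
      rw [h] at ih
      dsimp only
      split_ifs with hc
      · exact ih.tail
      · exact List.IsChain.cons_cons hc ih

lemma reduce_eq_self_of_chain' {L : List (α × Bool)} (h : List.Chain' P L) :
    reduce L = L := by
  induction L with
  | nil => rfl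
  | cons x M ih =>
    have hM : reduce M = M := ih h.tail
    rw [reduce.cons, hM]
    cases M with
    | nil => rfl
    | cons hd tl =>
      dsimp only
      rw [if_neg]
      exact (List.isChain_cons_cons.mp h).1

/-- cyclically reduced condition -/
def Cyc (L : List (α × Bool)) : Prop :=
  ∀ p ∈ L.getLast?, ∀ q ∈ L.head?, P p q

lemma head?_flatten_replicate {L : List (α × Bool)} :
    ∀ n q, q ∈ ((List.replicate n L).flatten).head? → q ∈ L.head? := by
  intro n
  induction n with
  | zero => simp
  | succ k ih =>
    intro q hq
    rw [List.replicate_succ, List.flatten_cons] at hq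
    rcases eq_or_ne L [] with rfl | hL
    · simpa using ih q (by simpa using hq)
    · rwa [List.head?_append_of_ne_nil _ hL] at hq

lemma chain'_flatten_replicate {L : List (α × Bool)} (hC : List.Chain' P L) (hcyc : Cyc L) :
    ∀ n, List.Chain' P ((List.replicate n L).flatten) := by
  intro n
  induction n with
  | zero => exact List.isChain_nil
  | succ k ih =>
    rw [List.replicate_succ, List.flatten_cons]
    refine hC.append ih ?_
    intro p hp q hq
    exact hcyc p hp q (head?_flatten_replicate k q hq)

lemma pow_ne_one_of_cyc {L : List (α × Bool)} (hL : L ≠ [])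
    (hC : List.Chain' P L) (hcyc : Cyc L) {n : ℕ} (hn : n ≠ 0) :
    mk L ^ n ≠ 1 := by
  intro h
  have h1 : (mk L ^ n).toWord = (List.replicate n L).flatten := by
    rw [pow_mk, toWord_mk, reduce_eq_self_of_chain' (chain'_flatten_replicate hC hcyc n)]
  have h2 : (mk L ^ n).toWord = [] := by rw [h]; exact toWord_one
  rw [h1] at h2
  have : n * L.length = 0 := by
    have := congrArg List.length h2
    simpa [List.length_flatten, List.map_replicate, List.sum_replicate, smul_eq_mul] using this
  rcases Nat.mul_eq_zero.mp this with h | h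
  · exact hn h
  · exact hL (List.length_eq_zero_iff.mp h)

lemma chain'_toWord (x : FreeGroup α) : List.Chain' P x.toWord := by
  have := chain'_reduce x.toWord
  rwa [reduce_toWord] at this

lemma exists_decomp {X : Type*} {L : List X} {p q : X}
    (hhead : L.head? = some q) (hlast : L.getLast? = some p) (hne : p ≠ q) :
    ∃ M, L = [q] ++ M ++ [p] := by
  rcases L with _ | ⟨a, T⟩
  · simp at hhead
  · have ha : a = q := by simpa using hhead
    rw [← ha] at hne ⊢
    rcases T.eq_nil_or_concat with rfl | ⟨M, b, rfl⟩
    · simp at hlast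
      exact absurd hlast.symm hne
    · simp only [List.concat_eq_append] at hlast ⊢
      have h2 : (a :: (M ++ [b])).getLast? = some b := by
        rw [show a :: (M ++ [b]) = (a :: M) ++ [b] by simp, List.getLast?_concat]
      rw [h2] at hlast
      have hb : b = p := Option.some_injective _ hlast
      exact ⟨M, by simp [hb]⟩

/-- cyclic reduction: every nontrivial element is conjugate to a nontrivial
cyclically reduced element -/
lemma cyclic_reduction :
    ∀ N (x : FreeGroup α), x.norm ≤ N → x ≠ 1 →
      ∃ g y : FreeGroup α, x = g * y * g⁻¹ ∧ y ≠ 1 ∧ Cyc y.toWord := by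
  intro N
  induction N with
  | zero =>
    intro x hle hx
    exact absurd (norm_eq_zero.mp (Nat.le_zero.mp hle)) hx
  | succ N ih =>
    intro x hle hx
    by_cases hcyc : Cyc x.toWord
    · exact ⟨1, x, by simp, hx, hcyc⟩
    · unfold Cyc at hcyc
      push_neg at hcyc
      obtain ⟨p, hp, q, hq, hPq⟩ := hcyc
      unfold P at hPq
      push_neg at hPq
      have hpq : p = (q.1, !q.2) := Prod.ext hPq.1 hPq.2
      have hne : p ≠ q := by
        rw [hpq]
        intro h
        have := congrArg Prod.snd h
        simp at this
      obtain ⟨M, hLdecomp⟩ := exists_decomp (Option.mem_def.mp hq) (Option.mem_def.mp hp) hne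
      set u : FreeGroup α := mk [q] with hu
      set z : FreeGroup α := mk M with hz
      have hinv : mk [(q.1, !q.2)] = u⁻¹ := by
        have hir : invRev [q] = [(q.1, !q.2)] := by simp [invRev]
        rw [hu, inv_mk, hir]
      have hxuzu : x = u * z * u⁻¹ := by
        conv_lhs => rw [← mk_toWord (x := x)]
        rw [hLdecomp, ← mul_mk, ← mul_mk, hpq, hinv]
      have hzne : z ≠ 1 := by
        intro h
        rw [h, mul_one, mul_inv_cancel] at hxuzu
        exact hx hxuzu
      have hMchain : List.Chain' P M :=
        (chain'_toWord x).infix (by rw [hLdecomp]; exact ⟨[q], [p], by simp⟩)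
      have hzword : z.toWord = M := by rw [hz, toWord_mk, reduce_eq_self_of_chain' hMchain]
      have hnormz : z.norm ≤ N := by
        have h2 : x.toWord.length ≤ N + 1 := hle
        have h3 : x.toWord.length = M.length + 2 := by
          rw [hLdecomp]
          simp
          try omega
        have h4 : z.norm = M.length := by rw [FreeGroup.norm, hzword]
        omega
      obtain ⟨h, y, hzy, hy1, hycyc⟩ := ih z hnormz hzne
      refine ⟨u * h, y, ?_, hy1, hycyc⟩
      rw [hxuzu, hzy, mul_inv_rev]
      group

/-- Free groups are torsion-free. -/
lemma pow_ne_one {x : FreeGroup α} (hx : x ≠ 1) {n : ℕ} (hn : n ≠ 0) : x ^ n ≠ 1 := by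
  obtain ⟨g, y, hxy, hy1, hycyc⟩ := cyclic_reduction x.norm x le_rfl hx
  have hyne : y.toWord ≠ [] := by simpa [toWord_eq_nil_iff] using hy1
  have hypow : y ^ n ≠ 1 := by
    have := pow_ne_one_of_cyc hyne (chain'_toWord y) hycyc hn
    rwa [mk_toWord] at this
  intro h
  apply hypow
  have : x = MulAut.conj g y := by rw [hxy]; rfl
  rw [this, ← map_pow] at h
  exact (MulAut.conj g).injective (by simpa using h)

end DehnAux

/-- The subgroup of inner automorphisms (the range of `MulAut.conj`) is normal in
the automorphism group. -/
instance innRange_normal (G : Type*) [Group G] :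
    ((MulAut.conj : G →* MulAut G).range).Normal := by
  constructor
  rintro n ⟨g, rfl⟩ f
  refine ⟨f g, ?_⟩
  ext x
  simp only [MulAut.conj_apply, MulAut.mul_apply, MulAut.inv_apply_self, map_mul, map_inv]
  simp [mul_assoc]

/-- The outer automorphism group `Out(G) = Aut(G)/Inn(G)`. -/
abbrev OutAut (G : Type*) [Group G] : Type _ :=
  MulAut G ⧸ (MulAut.conj : G →* MulAut G).range

/-- With `F = FreeGroup (Option I)` (basis `a_i = FreeGroup.of (some i)`,
`t = FreeGroup.of none`), `A` the subgroup generated by the `a_i`, `w ∈ A` nontrivial,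
and `D_w` the Dehn twist (`D_w (a_i) = a_i`, `D_w t = w t`): for every nonzero integer `n`
the automorphism `D_wⁿ` is not inner, and consequently the image of `D_w` in
`Out(F) = Aut(F)/Inn(F)` has infinite order. -/
theorem dehn_twist_hnn_infinite_order_in_out
    {I : Type*} [Nonempty I]
    (A : Subgroup (FreeGroup (Option I)))
    (hA : A = Subgroup.closure (Set.range fun i : I => FreeGroup.of (some i)))
    (w : FreeGroup (Option I)) (hwA : w ∈ A) (hw1 : w ≠ 1)
    (D : MulAut (FreeGroup (Option I)))
    (hDa : ∀ i : I, D (FreeGroup.of (some i)) = FreeGroup.of (some i))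
    (hDt : D (FreeGroup.of (none : Option I)) = w * FreeGroup.of (none : Option I)) :
    (∀ n : ℤ, n ≠ 0 →
        ¬ ∃ g : FreeGroup (Option I), ∀ x : FreeGroup (Option I),
          (D ^ n) x = g * x * g⁻¹) ∧
      ¬ IsOfFinOrder
        (QuotientGroup.mk' (MulAut.conj : FreeGroup (Option I) →* _).range D :
          OutAut (FreeGroup (Option I))) := by
  classical
  set t : FreeGroup (Option I) := FreeGroup.of (none : Option I) with ht
  -- the projection killing t
  set π : FreeGroup (Option I) →* FreeGroup I :=
    FreeGroup.lift (fun o : Option I => o.elim 1 FreeGroup.of) with hπ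
  have hπt : π t = 1 := by rw [hπ, ht, FreeGroup.lift_apply_of]; rfl
  -- the inclusion of A
  set ι : FreeGroup I →* FreeGroup (Option I) :=
    FreeGroup.lift (fun i : I => FreeGroup.of (some i)) with hι
  have hπι : ∀ v : FreeGroup I, π (ι v) = v := by
    intro v
    have : π.comp ι = MonoidHom.id (FreeGroup I) := by
      apply FreeGroup.ext_hom
      intro a
      simp [hπ, hι, FreeGroup.lift_apply_of]
    calc π (ι v) = (π.comp ι) v := rfl
    _ = v := by rw [this]; rfl
  -- π w ≠ 1
  have hwrange : w ∈ ι.range := by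
    rw [hι, FreeGroup.range_lift_eq_closure, ← hA]
    exact hwA
  obtain ⟨v, hv⟩ := hwrange
  have hπw : π w = v := by rw [← hv, hπι]
  have hπwne : π w ≠ 1 := by
    rw [hπw]
    intro h
    rw [h, map_one] at hv
    exact hw1 hv.symm
  -- D fixes w
  have hDfix : ∀ x ∈ A, D x = x := by
    rw [hA]
    intro x hx
    induction hx using Subgroup.closure_induction with
    | mem x hx => obtain ⟨i, rfl⟩ := hx; exact hDa i
    | one => simp
    | mul a b _ _ ha hb => rw [map_mul, ha, hb]
    | inv a _ ha => rw [map_inv, ha]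
  have hw : D w = w := hDfix w hwA
  have hwinv : D⁻¹ w = w := D.injective (by rw [MulAut.apply_inv_self, hw])
  have hDinvt : D⁻¹ t = w⁻¹ * t :=
    D.injective (by rw [MulAut.apply_inv_self, map_mul, map_inv, hw, hDt, inv_mul_cancel_left])
  have hfixz : ∀ n : ℤ, (D ^ n) w = w := by
    intro n
    induction n using Int.induction_on with
    | zero => simp
    | succ k ih => rw [zpow_add_one, MulAut.mul_apply, hw, ih]
    | pred k ih => rw [zpow_sub_one, MulAut.mul_apply, hwinv, ih]
  have htz : ∀ n : ℤ, (D ^ n) t = w ^ n * t := by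
    intro n
    induction n using Int.induction_on with
    | zero => simp
    | succ k ih =>
      rw [zpow_add_one, MulAut.mul_apply, hDt, map_mul, hfixz, ih]
      group
    | pred k ih =>
      rw [zpow_sub_one, MulAut.mul_apply, hDinvt, map_mul, map_inv, hfixz, ih]
      group
  have part1 : ∀ n : ℤ, n ≠ 0 →
      ¬ ∃ g : FreeGroup (Option I), ∀ x : FreeGroup (Option I),
        (D ^ n) x = g * x * g⁻¹ := by
    rintro n hn ⟨g, hg⟩
    have h1 : w ^ n * t = g * t * g⁻¹ := by rw [← htz n, hg t]
    have h2 := congrArg π h1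
    rw [map_mul, map_zpow, hπt, mul_one, map_mul, map_mul, map_inv, hπt, mul_one,
      mul_inv_cancel] at h2
    -- (π w)^n = 1
    have h3 : (π w) ^ (n.natAbs) = 1 := by
      rcases Int.natAbs_eq n with h | h
      · rw [h, zpow_natCast] at h2
        exact h2
      · rw [h, zpow_neg, inv_eq_one, zpow_natCast] at h2
        exact h2
    exact DehnAux.pow_ne_one hπwne (Int.natAbs_ne_zero.mpr hn) h3
  refine ⟨part1, ?_⟩
  intro hfin
  obtain ⟨m, hm, hDm⟩ := isOfFinOrder_iff_pow_eq_one.mp hfin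
  rw [← map_pow] at hDm
  have hmem : D ^ m ∈ (MulAut.conj : FreeGroup (Option I) →* _).range := by
    rwa [QuotientGroup.mk'_apply, QuotientGroup.eq_one_iff] at hDm
  obtain ⟨g, hg⟩ := hmem
  refine part1 (m : ℤ) (by exact_mod_cast hm.ne') ⟨g, fun x => ?_⟩
  rw [zpow_natCast, ← hg]
  rfl
end

section
/- Assume A is nontrivial, B is nonabelian with trivial center, and w ∈ B has infinite order. Then for every nonzero integer n, the automorphism D_wⁿ of F = A ∗ B is not an inner automorphism (i.e., there is no g ∈ F with D_wⁿ(x) = g x g⁻¹ for all x ∈ F). Consequently, the image of D_w in Out(F) = Aut(F)/Inn(F) has infinite order. -/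
set_option linter.unusedSectionVars false
set_option linter.unusedVariables false

namespace DehnAux

open Monoid CoprodI



variable {ι : Type*} {M : ι → Type*} [∀ i, Group (M i)]

theorem prod_injective : Function.Injective (Word.prod : Word M → CoprodI M) := by
  classical
  exact fun a b h => Word.equiv.symm.injective h

theorem noncomm {i j : ι} (hij : i ≠ j) {a : M i} {b : M j} (ha : a ≠ 1) (hb : b ≠ 1) :
    (of a : CoprodI M) * of b ≠ of b * of a := by
  intro h
  have hab : (⟨[⟨i,a⟩,⟨j,b⟩], by
      rintro l hl
      simp only [List.mem_cons, List.mem_singleton, List.not_mem_nil, or_false] at hl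
      rcases hl with rfl | rfl <;> assumption, by
      simpa using hij⟩ : Word M).prod = of a * of b := by
    simp [Word.prod]
  have hba : (⟨[⟨j,b⟩,⟨i,a⟩], by
      rintro l hl
      simp only [List.mem_cons, List.mem_singleton, List.not_mem_nil, or_false] at hl
      rcases hl with rfl | rfl <;> assumption, by
      simpa using hij.symm⟩ : Word M).prod = of b * of a := by
    simp [Word.prod]
  have := prod_injective (hab.trans (h.trans hba.symm))
  simp only [Word.mk.injEq, List.cons.injEq] at this
  exact hij (congrArg Sigma.fst this.1)

theorem chain_fst_congr {L L' : List (Σ i, M i)} (h : L.map Sigma.fst = L'.map Sigma.fst)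
    (hc : L.IsChain fun l l' => l.fst ≠ l'.fst) : L'.IsChain fun l l' => l.fst ≠ l'.fst := by
  rw [← List.isChain_map (f := Sigma.fst) (R := Ne)] at hc ⊢
  rwa [← h]

theorem cen {j : ι} {t₁ t₂ t₃ : M j} (h1 : t₁ ≠ 1) (h2 : t₂ ≠ 1) (h3 : t₃ ≠ 1)
    (h12 : t₁ ≠ t₂) (h13 : t₁ ≠ t₃) (h23 : t₂ ≠ t₃)
    {g : CoprodI M} (hg : ∀ t : M j, g * of t = of t * g) :
    ∃ c : M j, g = of c := by
  classical
  obtain ⟨W, hWg⟩ : ∃ W : Word M, W.prod = g := ⟨Word.equiv g, Word.equiv.symm_apply_apply g⟩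
  obtain ⟨L, hne, hch⟩ := W
  rcases L with _ | ⟨⟨i₁, m₁⟩, rest⟩
  · exact ⟨1, by rw [← hWg]; simp [Word.prod]⟩
  rcases rest.eq_nil_or_concat with rfl | ⟨mid, ⟨i₂, m₂⟩, hrest⟩
  · -- single letter
    have hg1 : g = of m₁ := by rw [← hWg]; simp [Word.prod]
    by_cases hi : i₁ = j
    · subst hi; exact ⟨m₁, hg1⟩
    · exfalso
      have hm₁ : m₁ ≠ 1 := hne ⟨i₁, m₁⟩ (by simp)
      exact noncomm hi hm₁ h1 (by rw [← hg1]; exact hg t₁)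
  · exfalso
    rw [List.concat_eq_append] at hrest
    subst hrest
    -- L = ⟨i₁,m₁⟩ :: mid ++ [⟨i₂,m₂⟩]
    have hch_head : ∀ y ∈ (mid ++ [(⟨i₂,m₂⟩ : Σ i, M i)]).head?, (i₁:ι) ≠ y.fst := (List.isChain_cons.mp hch).1
    have hch_tail : (mid ++ [(⟨i₂,m₂⟩ : Σ i, M i)]).IsChain (fun l l' => l.fst ≠ l'.fst) :=
      (List.isChain_cons.mp hch).2
    have hch_pre : ((⟨i₁,m₁⟩ :: mid : List (Σ i, M i))).IsChain (fun l l' => l.fst ≠ l'.fst) :=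
      hch.prefix ⟨[⟨i₂,m₂⟩], by simp⟩
    have hlastL : ((⟨i₁,m₁⟩ :: mid ++ [⟨i₂,m₂⟩] : List (Σ i, M i))).getLast? = some ⟨i₂,m₂⟩ := by
      exact List.getLast?_concat
    have hgdec : g = of m₁ * ((mid.map fun l => (of l.snd : CoprodI M)).prod * of m₂) := by
      rw [← hWg]
      simp [Word.prod, List.map_append, List.prod_append, mul_assoc]
    have hm₁ : m₁ ≠ 1 := hne ⟨i₁, m₁⟩ (by simp)
    have hm₂ : m₂ ≠ 1 := hne ⟨i₂, m₂⟩ (by simp)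
    by_cases hi₁ : i₁ = j
    · subst hi₁
      by_cases hi₂ : i₁ = i₂
      · rcases hi₂ with rfl
        -- case D: both ends in M j; mid nonempty
        have hmidne : mid ≠ [] := by
          rintro rfl
          exact hch_head ⟨i₁, m₂⟩ (by simp) rfl
        obtain ⟨t, ht1, htm, hmt⟩ : ∃ t : M i₁, t ≠ 1 ∧ t * m₁ ≠ 1 ∧ m₂ * t ≠ 1 := by
          by_cases e1 : t₁ * m₁ ≠ 1 ∧ m₂ * t₁ ≠ 1
          · exact ⟨t₁, h1, e1.1, e1.2⟩
          by_cases e2 : t₂ * m₁ ≠ 1 ∧ m₂ * t₂ ≠ 1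
          · exact ⟨t₂, h2, e2.1, e2.2⟩
          by_cases e3 : t₃ * m₁ ≠ 1 ∧ m₂ * t₃ ≠ 1
          · exact ⟨t₃, h3, e3.1, e3.2⟩
          exfalso
          push_neg at e1 e2 e3
          -- each tᵢ is m₁⁻¹ or m₂⁻¹; three distinct elements can't fit in two slots
          have k1 : t₁ = m₁⁻¹ ∨ t₁ = m₂⁻¹ := by
            rcases Classical.em (t₁ * m₁ = 1) with h | h
            · exact Or.inl (eq_inv_of_mul_eq_one_left h)
            · exact Or.inr (eq_inv_of_mul_eq_one_right (e1 h))
          have k2 : t₂ = m₁⁻¹ ∨ t₂ = m₂⁻¹ := by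
            rcases Classical.em (t₂ * m₁ = 1) with h | h
            · exact Or.inl (eq_inv_of_mul_eq_one_left h)
            · exact Or.inr (eq_inv_of_mul_eq_one_right (e2 h))
          have k3 : t₃ = m₁⁻¹ ∨ t₃ = m₂⁻¹ := by
            rcases Classical.em (t₃ * m₁ = 1) with h | h
            · exact Or.inl (eq_inv_of_mul_eq_one_left h)
            · exact Or.inr (eq_inv_of_mul_eq_one_right (e3 h))
          rcases k1 with rfl | rfl <;> rcases k2 with k2 | k2 <;> rcases k3 with k3 | k3 <;>
            first
              | exact h12 k2.symm
              | exact h13 k3.symm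
              | exact h23 (k2.trans k3.symm)
        have hWl : (⟨⟨i₁, t * m₁⟩ :: mid ++ [⟨i₁, m₂⟩], by
            rintro l hl
            rcases List.mem_cons.mp hl with rfl | hl
            · exact htm
            · exact hne l (List.mem_cons_of_mem _ hl),
            chain_fst_congr (L := ⟨i₁,m₁⟩ :: mid ++ [⟨i₁,m₂⟩]) (by simp) hch⟩ :
              Word M).prod = of t * g := by
          rw [hgdec]
          simp [Word.prod, List.map_append, List.prod_append, mul_assoc, map_mul]
        have hWr : (⟨⟨i₁, m₁⟩ :: mid ++ [⟨i₁, m₂ * t⟩], by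
            rintro l hl
            rcases List.mem_cons.mp hl with rfl | hl
            · exact hm₁
            · rcases List.mem_append.mp hl with hl | hl
              · exact hne l (by simp [hl])
              · simp only [List.mem_singleton] at hl
                subst hl
                exact hmt,
            chain_fst_congr (L := ⟨i₁,m₁⟩ :: mid ++ [⟨i₁,m₂⟩]) (by simp) hch⟩ :
              Word M).prod = g * of t := by
          rw [hgdec]
          simp [Word.prod, List.map_append, List.prod_append, mul_assoc, map_mul]
        have heq := prod_injective (hWl.trans ((hg t).symm.trans hWr.symm))
        have hlists := congrArg Word.toList heq
        have hhd : (⟨i₁, t * m₁⟩ : Σ i, M i) = ⟨i₁, m₁⟩ := by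
          have := congrArg List.head? hlists
          simpa using this
        have : t * m₁ = m₁ := by simpa using hhd
        exact ht1 (mul_eq_right.mp this)
      · -- case B: i₁ = j, i₂ ≠ j: length contradiction
        have hWr : (⟨(⟨i₁,m₁⟩ :: mid ++ [⟨i₂,m₂⟩]) ++ [⟨i₁,t₁⟩], by
            rintro l hl
            rcases List.mem_append.mp hl with hl | hl
            · exact hne l hl
            · simp only [List.mem_singleton] at hl
              subst hl
              exact h1,
            List.isChain_append.mpr ⟨hch, List.isChain_singleton _, by
              intro x hx y hy
              rw [hlastL] at hx
              simp only [Option.mem_some_iff, List.head?_cons] at hx hy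
              subst hx; subst hy
              exact Ne.symm hi₂⟩⟩ : Word M).prod = g * of t₁ := by
          rw [hgdec]
          simp [Word.prod, List.map_append, List.prod_append, mul_assoc]
        by_cases htm : t₁ * m₁ = 1
        · have hWl : (⟨mid ++ [⟨i₂,m₂⟩], fun l hl => hne l (List.mem_cons_of_mem _ hl),
              hch_tail⟩ : Word M).prod = of t₁ * g := by
            rw [hgdec, ← mul_assoc, ← map_mul, htm, map_one, one_mul]
            simp [Word.prod, List.map_append, List.prod_append, mul_assoc]
          have heq := prod_injective (hWl.trans ((hWr.trans (hg t₁)).symm))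
          have := congrArg (fun w : Word M => w.toList.length) heq
          simp only [List.length_append, List.length_cons, List.length_singleton] at this
          omega
        · have hWl : (⟨⟨i₁, t₁ * m₁⟩ :: mid ++ [⟨i₂,m₂⟩], by
              rintro l hl
              rcases List.mem_cons.mp hl with rfl | hl
              · exact htm
              · exact hne l (List.mem_cons_of_mem _ hl),
              chain_fst_congr (L := ⟨i₁,m₁⟩ :: mid ++ [⟨i₂,m₂⟩]) (by simp) hch⟩ :
                Word M).prod = of t₁ * g := by
            rw [hgdec]
            simp [Word.prod, List.map_append, List.prod_append, mul_assoc, map_mul]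
          have heq := prod_injective (hWl.trans ((hWr.trans (hg t₁)).symm))
          have := congrArg (fun w : Word M => w.toList.length) heq
          simp only [List.length_append, List.length_cons, List.length_singleton] at this
          omega
    · -- case i₁ ≠ j : head comparison
      have hWl : (⟨⟨j,t₁⟩ :: (⟨i₁,m₁⟩ :: mid ++ [⟨i₂,m₂⟩]), by
          rintro l hl
          rcases List.mem_cons.mp hl with rfl | hl
          · exact h1
          · exact hne l hl,
          List.isChain_cons.mpr ⟨by
            intro y hy
            obtain rfl : (⟨i₁,m₁⟩ : Σ i, M i) = y := by simpa using hy
            exact Ne.symm hi₁, hch⟩⟩ : Word M).prod = of t₁ * g := by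
        rw [hgdec]
        simp [Word.prod, List.map_append, List.prod_append, mul_assoc]
      have key : ∃ Wr : Word M, Wr.prod = g * of t₁ ∧ Wr.toList.head? = some ⟨i₁,m₁⟩ := by
        by_cases hi₂ : i₂ = j
        · subst hi₂
          by_cases hmt : m₂ * t₁ = 1
          · refine ⟨⟨⟨i₁,m₁⟩ :: mid, fun l hl => hne l (by
                rcases List.mem_cons.mp hl with rfl | hl
                · exact List.mem_cons_self
                · exact List.mem_cons_of_mem _ (List.mem_append_left _ hl)), hch_pre⟩, ?_, by simp⟩
            rw [hgdec, mul_assoc, mul_assoc, ← map_mul, hmt, map_one, mul_one]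
            simp [Word.prod, List.map_append, List.prod_append, mul_assoc]
          · refine ⟨⟨⟨i₁,m₁⟩ :: mid ++ [⟨i₂, m₂ * t₁⟩], by
                rintro l hl
                rcases List.mem_cons.mp hl with rfl | hl
                · exact hm₁
                · rcases List.mem_append.mp hl with hl | hl
                  · exact hne l (by simp [hl])
                  · simp only [List.mem_singleton] at hl
                    subst hl
                    exact hmt,
                chain_fst_congr (L := ⟨i₁,m₁⟩ :: mid ++ [⟨i₂,m₂⟩]) (by simp) hch⟩, ?_, by simp⟩
            rw [hgdec]
            simp [Word.prod, List.map_append, List.prod_append, mul_assoc, map_mul]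
        · refine ⟨⟨(⟨i₁,m₁⟩ :: mid ++ [⟨i₂,m₂⟩]) ++ [⟨j,t₁⟩], by
              rintro l hl
              rcases List.mem_append.mp hl with hl | hl
              · exact hne l hl
              · simp only [List.mem_singleton] at hl
                subst hl
                exact h1,
              List.isChain_append.mpr ⟨hch, List.isChain_singleton _, by
                intro x hx y hy
                rw [hlastL] at hx
                simp only [Option.mem_some_iff, List.head?_cons] at hx hy
                subst hx; subst hy
                exact hi₂⟩⟩, ?_, by simp⟩
          rw [hgdec]
          simp [Word.prod, List.map_append, List.prod_append, mul_assoc]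
      obtain ⟨Wr, hWr, hhd⟩ := key
      have heq := prod_injective (hWl.trans ((hWr.trans (hg t₁)).symm))
      have hl2 := congrArg Word.toList heq
      rw [← hl2] at hhd
      simp only [List.head?_cons, Option.some.injEq] at hhd
      exact hi₁ (congrArg Sigma.fst hhd).symm


section transfer

variable {A : Type u} {B : Type v} [Group A] [Group B]

/-- The `Bool`-indexed family for the binary free product. -/
abbrev GF (A : Type u) (B : Type v) : Bool → Type (max u v) :=
  fun b => cond b (ULift.{v} A) (ULift.{u} B)

instance instGFGroup : ∀ b, Group (GF A B b)
  | true => inferInstanceAs (Group (ULift A))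
  | false => inferInstanceAs (Group (ULift B))

/-- The comparison map `A ∗ B →* CoprodI (GF A B)`. -/
def toCI : Monoid.Coprod A B →* CoprodI (GF A B) :=
  Coprod.lift
    ((CoprodI.of (M := GF A B) (i := true)).comp
      (MulEquiv.ulift.symm : A ≃* ULift A).toMonoidHom)
    ((CoprodI.of (M := GF A B) (i := false)).comp
      (MulEquiv.ulift.symm : B ≃* ULift B).toMonoidHom)

/-- The inverse comparison map. -/
def fromCI : CoprodI (GF A B) →* Monoid.Coprod A B :=
  CoprodI.lift fun b => match b with
    | true => Coprod.inl.comp (MulEquiv.ulift : ULift A ≃* A).toMonoidHom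
    | false => Coprod.inr.comp (MulEquiv.ulift : ULift B ≃* B).toMonoidHom

theorem toCI_inl (a : A) :
    toCI (Coprod.inl a : Monoid.Coprod A B) = of (M := GF A B) (i := true) (ULift.up a) := rfl

theorem toCI_inr (b : B) :
    toCI (Coprod.inr b : Monoid.Coprod A B) = of (M := GF A B) (i := false) (ULift.up b) := rfl

theorem fromCI_toCI (x : Monoid.Coprod A B) : fromCI (toCI x) = x := by
  have h : (fromCI).comp (toCI) = MonoidHom.id (Monoid.Coprod A B) := by
    apply Coprod.hom_ext
    · ext a
      show fromCI (toCI (Coprod.inl a)) = Coprod.inl a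
      rw [toCI_inl, fromCI, CoprodI.lift_of]
      rfl
    · ext b
      show fromCI (toCI (Coprod.inr b)) = Coprod.inr b
      rw [toCI_inr, fromCI, CoprodI.lift_of]
      rfl
  exact DFunLike.congr_fun h x

theorem toCI_injective : Function.Injective (toCI : Monoid.Coprod A B → _) :=
  Function.LeftInverse.injective fromCI_toCI

theorem up_ne_one {G : Type*} [Group G] {x : G} (h : x ≠ 1) : (ULift.up x : ULift G) ≠ 1 :=
  fun h' => h (congrArg ULift.down h')

/-- In `A ∗ B`, nontrivial elements of the two factors do not commute. -/
theorem coprod_noncomm {a : A} {b : B} (ha : a ≠ 1) (hb : b ≠ 1) :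
    (Coprod.inl a : Monoid.Coprod A B) * Coprod.inr b ≠ Coprod.inr b * Coprod.inl a := by
  intro h
  refine noncomm (M := GF A B) (i := true) (j := false) (by simp)
    (up_ne_one ha) (up_ne_one hb) ?_
  have := congrArg toCI h
  simpa only [map_mul, toCI_inl, toCI_inr] using this

/-- Anything commuting with all of the second factor lies in the second factor. -/
theorem coprod_cen {t₁ t₂ t₃ : B} (h1 : t₁ ≠ 1) (h2 : t₂ ≠ 1) (h3 : t₃ ≠ 1)
    (h12 : t₁ ≠ t₂) (h13 : t₁ ≠ t₃) (h23 : t₂ ≠ t₃)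
    {g : Monoid.Coprod A B} (hg : ∀ b : B, g * Coprod.inr b = Coprod.inr b * g) :
    ∃ c : B, g = Coprod.inr c := by
  have hgt : ∀ t : GF A B false, toCI g * of t = of t * toCI g := by
    intro t
    have := congrArg toCI (hg t.down)
    simpa only [map_mul, toCI_inr, ULift.up_down] using this
  obtain ⟨c, hc⟩ := cen (M := GF A B) (j := false)
    (up_ne_one h1) (up_ne_one h2) (up_ne_one h3)
    (fun h => h12 (congrArg ULift.down h)) (fun h => h13 (congrArg ULift.down h))
    (fun h => h23 (congrArg ULift.down h)) hgt
  exact ⟨c.down, toCI_injective (by rw [hc, toCI_inr]; rfl)⟩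

end transfer

end DehnAux


open Monoid Coprod

/-- Let `A` and `B` be groups with `A` nontrivial and `B` nonabelian
with trivial center, `F = A ∗ B` their free product, `w ∈ B` of infinite order, and
`D_w` the Dehn twist automorphism of `F` with `D_w (inl a) = (inr w) (inl a) (inr w)⁻¹`
and `D_w (inr b) = inr b`.  Then for every nonzero integer `n` the automorphism `D_wⁿ`
is not inner, and consequently the image of `D_w` in `Out(F) = Aut(F)/Inn(F)` has
infinite order. -/
theorem dehn_twist_amalgam_infinite_order_in_out
    {A B : Type*} [Group A] [Group B] [Nontrivial A]
    (hBnonab : ∃ x y : B, x * y ≠ y * x)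
    (hBcenter : Subgroup.center B = ⊥)
    (w : B) (hw : ¬ IsOfFinOrder w)
    (D : MulAut (Monoid.Coprod A B))
    (hDa : ∀ a : A, D (Coprod.inl a) =
      Coprod.inr w * Coprod.inl a * (Coprod.inr w : Monoid.Coprod A B)⁻¹)
    (hDb : ∀ b : B, D (Coprod.inr b) = Coprod.inr b) :
    (∀ n : ℤ, n ≠ 0 →
        ¬ ∃ g : Monoid.Coprod A B, ∀ x : Monoid.Coprod A B,
          (D ^ n) x = g * x * g⁻¹) ∧
      ¬ IsOfFinOrder
        (QuotientGroup.mk' (MulAut.conj : Monoid.Coprod A B →* _).range D :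
          OutAut (Monoid.Coprod A B)) := by
  classical
  have hwz := injective_zpow_iff_not_isOfFinOrder.mpr hw
  -- D⁻¹ on generators
  have hDbinv : ∀ b : B, D⁻¹ (Coprod.inr b) = Coprod.inr b := by
    intro b
    apply D.injective
    show D (D⁻¹ (Coprod.inr b)) = _
    rw [MulAut.apply_inv_self, hDb]
  have hDainv : ∀ a : A, D⁻¹ (Coprod.inl a) =
      (Coprod.inr w : Monoid.Coprod A B)⁻¹ * Coprod.inl a * Coprod.inr w := by
    intro a
    apply D.injective
    show D (D⁻¹ (Coprod.inl a)) = _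
    rw [MulAut.apply_inv_self, map_mul, map_mul, map_inv, hDb, hDa]
    group
  -- powers of D on generators
  have hDninr : ∀ (n : ℤ) (b : B), (D ^ n) (Coprod.inr b) = Coprod.inr b := by
    intro n b
    induction n using Int.induction_on with
    | zero => simp
    | succ k ih =>
      rw [zpow_add_one, MulAut.mul_apply, hDb, ih]
    | pred k ih =>
      rw [zpow_sub_one, MulAut.mul_apply, hDbinv, ih]
  have hDninl : ∀ (n : ℤ) (a : A), (D ^ n) (Coprod.inl a) =
      Coprod.inr (w ^ n) * Coprod.inl a * (Coprod.inr (w ^ n) : Monoid.Coprod A B)⁻¹ := by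
    intro n a
    induction n using Int.induction_on with
    | zero => simp
    | succ k ih =>
      rw [zpow_add_one, MulAut.mul_apply, hDa, map_mul, map_mul, map_inv, ih, hDninr k w,
        show ((k : ℤ) + 1 : ℤ) = 1 + (k : ℤ) from add_comm _ _, zpow_add, zpow_one, map_mul]
      group
    | pred k ih =>
      rw [zpow_sub_one, MulAut.mul_apply, hDainv, map_mul, map_mul, map_inv, ih, hDninr (-(k:ℤ)) w,
        show (-(k : ℤ) - 1 : ℤ) = -1 + -(k : ℤ) by ring, zpow_add, zpow_neg_one, map_mul, map_inv]
      group
  have main : ∀ n : ℤ, n ≠ 0 →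
      ¬ ∃ g : Monoid.Coprod A B, ∀ x : Monoid.Coprod A B,
        (D ^ n) x = g * x * g⁻¹ := by
    rintro n hn ⟨g, hgconj⟩
    -- g commutes with every inr b
    have hcomm : ∀ b : B, g * Coprod.inr b = Coprod.inr b * g := by
      intro b
      have h := (hgconj (Coprod.inr b)).symm
      rw [hDninr n b, mul_inv_eq_iff_eq_mul] at h
      exact h
    -- powers of w are distinct and nontrivial
    have hne : ∀ m : ℤ, m ≠ 0 → w ^ m ≠ 1 := by
      intro m hm h
      exact hm (hwz (by simpa using h))
    have hd : ∀ m k : ℤ, m ≠ k → w ^ m ≠ w ^ k := fun m k hmk h => hmk (hwz h)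
    obtain ⟨c, hc⟩ := DehnAux.coprod_cen (A := A)
      (hne 1 one_ne_zero) (hne 2 two_ne_zero) (hne 3 (by norm_num))
      (hd 1 2 (by norm_num)) (hd 1 3 (by norm_num)) (hd 2 3 (by norm_num)) hcomm
    -- c is central, hence 1, hence g = 1
    have hc1 : c = 1 := by
      have hcen : c ∈ Subgroup.center B := by
        rw [Subgroup.mem_center_iff]
        intro b
        have h := hcomm b
        rw [hc, ← map_mul, ← map_mul] at h
        exact (Coprod.inr_injective h).symm
      rw [hBcenter] at hcen
      simpa using hcen
    have hg1 : g = 1 := by rw [hc, hc1, map_one]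
    -- contradiction with inl a
    obtain ⟨a, ha⟩ := exists_ne (1 : A)
    have h2 := hgconj (Coprod.inl a)
    rw [hDninl n a, hg1, one_mul, inv_one, mul_one] at h2
    rw [mul_inv_eq_iff_eq_mul] at h2
    exact DehnAux.coprod_noncomm ha (hne n hn) (h2.symm)
  refine ⟨main, ?_⟩
  intro hfin
  rw [isOfFinOrder_iff_pow_eq_one] at hfin
  obtain ⟨m, hm, hq⟩ := hfin
  have hmem : (D ^ m : MulAut (Monoid.Coprod A B)) ∈
      (MulAut.conj : Monoid.Coprod A B →* MulAut (Monoid.Coprod A B)).range := by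
    rw [← QuotientGroup.eq_one_iff]
    rw [← map_pow] at hq
    exact hq
  obtain ⟨g, hgc⟩ := hmem
  refine main m (by exact_mod_cast hm.ne') ⟨g, fun x => ?_⟩
  rw [zpow_natCast, ← hgc]
  rfl
end

section
/- Suppose Φ is an automorphism of F satisfying: Φ(w) = w; Φ(a_i) ∈ A' for every i ∈ I; and Φ(t) = wᵐ t α for some integer m and some element α ∈ A'. Then the image of D_w in Out(F) = Aut(F)/Inn(F) is an element of infinite order lying in the centralizer of the image of Φ in Out(F). In particular, the centralizer of the image of Φ in Out(F) contains an infinite-order element represented by the Dehn twist D_w. -/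
-- torsion-freeness helpers
private def expSum : FreeGroup Unit →* Multiplicative ℤ :=
  FreeGroup.lift fun _ => Multiplicative.ofAdd 1

private lemma expSum_leftInv (v : FreeGroup Unit) :
    FreeGroup.of () ^ (Multiplicative.toAdd (expSum v)) = v := by
  induction v using FreeGroup.induction_on with
  | C1 => simp [expSum]
  | of x =>
      cases x
      show FreeGroup.of () ^ Multiplicative.toAdd (expSum (FreeGroup.of ())) = FreeGroup.of ()
      simp [expSum]
  | inv_of x ih => simp only [map_inv] at *; simp [zpow_neg, ih]
  | mul x y ihx ihy =>
      rw [map_mul]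
      rw [toAdd_mul, zpow_add, ihx, ihy]

private lemma freeGroupUnit_pow_eq_one {v : FreeGroup Unit} {n : ℕ} (hn : 0 < n)
    (h : v ^ n = 1) : v = 1 := by
  have h2 : (expSum v) ^ n = 1 := by rw [← map_pow, h, map_one]
  have h3 : (n : ℤ) * Multiplicative.toAdd (expSum v) = 0 := by
    have := congrArg Multiplicative.toAdd h2
    simpa [toAdd_pow, mul_comm] using this
  have h4 : Multiplicative.toAdd (expSum v) = 0 := by
    rcases mul_eq_zero.1 h3 with h | h
    · exact absurd h (by exact_mod_cast hn.ne')
    · exact h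
  rw [← expSum_leftInv v, h4, zpow_zero]

lemma freeGroup_pow_eq_one {α : Type*} {x : FreeGroup α} {n : ℕ} (hn : 0 < n)
    (h : x ^ n = 1) : x = 1 := by
  classical
  -- pass to the subgroup generated by x, which is free (Nielsen–Schreier) and commutative
  set H := Subgroup.zpowers x with hH
  have hxH : x ∈ H := Subgroup.mem_zpowers x
  set e : H ≃* FreeGroup (IsFreeGroup.Generators H) := IsFreeGroup.toFreeGroup H
  have hcomm : ∀ u v : FreeGroup (IsFreeGroup.Generators H), u * v = v * u := by
    intro u v
    have : e.symm u * e.symm v = e.symm v * e.symm u := mul_comm' _ _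
    have := congrArg e this
    simpa using this
  -- therefore the generator type is a subsingleton
  have hsub : Subsingleton (IsFreeGroup.Generators H) := by
    by_contra hns
    rcases (not_subsingleton_iff_nontrivial.1 hns) with ⟨⟨a, b, hab⟩⟩
    have := hcomm (FreeGroup.of a) (FreeGroup.of b)
    have h1 : (FreeGroup.of a * FreeGroup.of b).toWord
        = [(a, true), (b, true)] := by
      rw [show FreeGroup.of a = FreeGroup.mk [(a,true)] from rfl,
        show FreeGroup.of b = FreeGroup.mk [(b,true)] from rfl, FreeGroup.mul_mk]
      rw [FreeGroup.toWord_mk]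
      simp [FreeGroup.reduce, hab]
    have h2 : (FreeGroup.of b * FreeGroup.of a).toWord
        = [(b, true), (a, true)] := by
      rw [show FreeGroup.of b = FreeGroup.mk [(b,true)] from rfl,
        show FreeGroup.of a = FreeGroup.mk [(a,true)] from rfl, FreeGroup.mul_mk]
      rw [FreeGroup.toWord_mk]
      simp [FreeGroup.reduce, hab.symm]
    rw [this] at h1
    rw [h2] at h1
    simp at h1
    exact hab h1.1.symm
  -- now we get the result
  rcases isEmpty_or_nonempty (IsFreeGroup.Generators H) with he | hne
  · -- free group on empty type is trivial
    have : e ⟨x, hxH⟩ = 1 := by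
      have := (e ⟨x, hxH⟩).toWord
      have h0 : (e ⟨x, hxH⟩).toWord = [] := by
        cases h' : (e ⟨x, hxH⟩).toWord with
        | nil => rfl
        | cons a _ => exact (he.false a.1).elim
      exact FreeGroup.toWord_eq_nil_iff.1 h0
    have := congrArg e.symm this
    simp at this
    exact this
  · have : Unique (IsFreeGroup.Generators H) := uniqueOfSubsingleton hne.some
    set φ := FreeGroup.freeGroupCongr (Equiv.equivPUnit.{_,1} (IsFreeGroup.Generators H))
    set ψ := FreeGroup.freeGroupCongr (Equiv.punitEquivPUnit.{1,1})
    -- transfer to FreeGroup Unit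
    set χ : FreeGroup (IsFreeGroup.Generators H) ≃* FreeGroup Unit :=
      FreeGroup.freeGroupCongr (Equiv.ofUnique _ Unit)
    have hv : (χ (e ⟨x, hxH⟩)) ^ n = 1 := by
      rw [← map_pow, ← map_pow]
      have hx' : (⟨x, hxH⟩ : H) ^ n = 1 := by
        ext; push_cast; exact h
      rw [hx', map_one, map_one]
    have := freeGroupUnit_pow_eq_one hn hv
    have h1 : e ⟨x, hxH⟩ = 1 := by
      have := congrArg χ.symm this
      simpa using this
    have := congrArg e.symm h1
    simp at this
    exact this



/-- Let `F` be the free group on `{a_i}_{i ∈ I} ∪ {t}`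
(realized as `FreeGroup (Option I)`), `A` the subgroup generated by the `a_i`,
`w ∈ A` nontrivial, `A'` the subgroup generated by `A ∪ {t⁻¹ w t}`, and `D_w` the
Dehn twist automorphism (`D_w (a_i) = a_i`, `D_w t = w t`).  If `Φ` is an automorphism
of `F` with `Φ w = w`, `Φ (a_i) ∈ A'` for all `i`, and `Φ t = wᵐ t α` with `m : ℤ`,
`α ∈ A'`, then the image of `D_w` in `Out(F)` is an element of infinite order lying
in the centralizer of the image of `Φ` in `Out(F)`. -/
theorem dehn_twist_hnn_centralizer_in_out
    {I : Type*} [Nonempty I]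
    (A : Subgroup (FreeGroup (Option I)))
    (hA : A = Subgroup.closure (Set.range fun i : I => FreeGroup.of (some i)))
    (w : FreeGroup (Option I)) (hwA : w ∈ A) (hw1 : w ≠ 1)
    (A' : Subgroup (FreeGroup (Option I)))
    (hA' : A' = Subgroup.closure
      ((A : Set (FreeGroup (Option I))) ∪
        {(FreeGroup.of (none : Option I))⁻¹ * w * FreeGroup.of (none : Option I)}))
    (D : MulAut (FreeGroup (Option I)))
    (hDa : ∀ i : I, D (FreeGroup.of (some i)) = FreeGroup.of (some i))
    (hDt : D (FreeGroup.of (none : Option I)) = w * FreeGroup.of (none : Option I))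
    (Φ : MulAut (FreeGroup (Option I)))
    (hΦw : Φ w = w)
    (hΦa : ∀ i : I, Φ (FreeGroup.of (some i)) ∈ A')
    (hΦt : ∃ (m : ℤ) (α : FreeGroup (Option I)), α ∈ A' ∧
      Φ (FreeGroup.of (none : Option I)) = w ^ m * FreeGroup.of (none : Option I) * α) :
    ¬ IsOfFinOrder
        (QuotientGroup.mk' (MulAut.conj : FreeGroup (Option I) →* _).range D :
          OutAut (FreeGroup (Option I))) ∧
      (QuotientGroup.mk' (MulAut.conj : FreeGroup (Option I) →* _).range D :
          OutAut (FreeGroup (Option I))) ∈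
        Subgroup.centralizer
          {(QuotientGroup.mk' (MulAut.conj : FreeGroup (Option I) →* _).range Φ :
            OutAut (FreeGroup (Option I)))} := by
  -- D fixes A pointwise
  have hDA : ∀ x ∈ A, D x = x := by
    intro x hx
    rw [hA] at hx
    induction hx using Subgroup.closure_induction with
    | mem y hy => obtain ⟨i, rfl⟩ := hy; exact hDa i
    | one => exact map_one D
    | mul y z _ _ hy hz => rw [map_mul, hy, hz]
    | inv y _ hy => rw [map_inv, hy]
  have hDw : D w = w := hDA w hwA
  -- D fixes A' pointwise
  have hDA' : ∀ x ∈ A', D x = x := by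
    intro x hx
    rw [hA'] at hx
    induction hx using Subgroup.closure_induction with
    | mem y hy =>
        rcases hy with hy | hy
        · exact hDA y hy
        · rw [Set.mem_singleton_iff] at hy
          subst hy
          rw [map_mul, map_mul, map_inv, hDt, hDw]
          group
    | one => exact map_one D
    | mul y z _ _ hy hz => rw [map_mul, hy, hz]
    | inv y _ hy => rw [map_inv, hy]
  -- Φ and D commute on the nose
  have hcomm : Φ * D = D * Φ := by
    obtain ⟨m, α, hα, hΦt'⟩ := hΦt
    have hhom : ((Φ * D : MulAut (FreeGroup (Option I))) :
          FreeGroup (Option I) →* FreeGroup (Option I))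
        = ((D * Φ : MulAut (FreeGroup (Option I))) :
          FreeGroup (Option I) →* FreeGroup (Option I)) := by
      apply FreeGroup.ext_hom
      rintro (_ | i)
      · show Φ (D (FreeGroup.of none)) = D (Φ (FreeGroup.of none))
        rw [hDt, hΦt']
        simp only [map_mul, map_zpow]
        rw [hΦw, hΦt', hDw, hDt, hDA' α hα]
        have hc : w * w ^ m = w ^ m * w := ((Commute.refl w).zpow_right m).eq
        simp only [← mul_assoc]
        rw [hc]
      · show Φ (D (FreeGroup.of (some i))) = D (Φ (FreeGroup.of (some i)))
        rw [hDa i, hDA' _ (hΦa i)]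
    ext x
    exact DFunLike.congr_fun hhom x
  constructor
  · -- infinite order
    intro hfin
    rw [isOfFinOrder_iff_pow_eq_one] at hfin
    obtain ⟨n, hn, hpow⟩ := hfin
    rw [← map_pow] at hpow
    have hmem : D ^ n ∈ (MulAut.conj : FreeGroup (Option I) →* _).range := by
      rwa [← QuotientGroup.eq_one_iff]
    obtain ⟨g, hg⟩ := hmem
    -- compute (D ^ n) t
    have hDpow : ∀ k : ℕ, (D ^ k) (FreeGroup.of (none : Option I))
        = w ^ k * FreeGroup.of (none : Option I) := by
      intro k
      induction k with
      | zero => simp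
      | succ k ih =>
          have hDwk : D (w ^ k) = w ^ k := by rw [map_pow, hDw]
          rw [pow_succ']
          show D ((D ^ k) (FreeGroup.of none)) = _
          rw [ih, map_mul, hDwk, hDt, pow_succ']
          simp only [← mul_assoc]
          rw [((Commute.refl w).pow_right k).eq]
    have := congrArg (fun ψ : MulAut (FreeGroup (Option I)) =>
      ψ (FreeGroup.of (none : Option I))) hg
    simp only [MulAut.conj_apply] at this
    rw [hDpow n] at this
    -- retraction killing t
    set ρ : FreeGroup (Option I) →* FreeGroup (Option I) :=
      FreeGroup.lift (fun o => o.elim 1 (fun i => FreeGroup.of (some i))) with hρ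
    have hρA : ∀ x ∈ A, ρ x = x := by
      intro x hx
      rw [hA] at hx
      induction hx using Subgroup.closure_induction with
      | mem y hy => obtain ⟨i, rfl⟩ := hy; simp [hρ]
      | one => exact map_one ρ
      | mul y z _ _ hy hz => rw [map_mul, hy, hz]
      | inv y _ hy => rw [map_inv, hy]
    have hρt : ρ (FreeGroup.of (none : Option I)) = 1 := by simp [hρ]
    have h5 := congrArg ρ this
    simp only [map_mul, map_inv, map_pow, hρt, hρA w hwA, mul_one, one_mul,
      mul_inv_cancel, inv_one] at h5
    exact hw1 (freeGroup_pow_eq_one hn h5.symm)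
  · -- centralizer
    rw [Subgroup.mem_centralizer_iff]
    intro h hh
    rw [Set.mem_singleton_iff] at hh
    subst hh
    rw [← map_mul, ← map_mul, hcomm]
end

section
/- Assume A is nontrivial, B is nonabelian with trivial center, and w ∈ B has infinite order. Suppose Φ is an automorphism of F = A ∗ B satisfying: Φ(w) = w; Φ(a) ∈ ⟨A, w⟩ for every a ∈ A; and Φ(b) ∈ B for every b ∈ B. Then the image of D_w in Out(F) = Aut(F)/Inn(F) is an element of infinite order lying in the centralizer of the image of Φ in Out(F). In particular, the centralizer of the image of Φ in Out(F) contains an infinite-order element represented by the Dehn twist D_w. -/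
open Monoid Coprod

section DehnAux

variable {A B : Type*} [Group A] [Group B]

/-- Translation action of `B` on `B → A`. -/
def translAct : B →* MulAut (B → A) where
  toFun c :=
    { toFun := fun f x => f (c⁻¹ * x)
      invFun := fun f x => f (c * x)
      left_inv := fun f => by funext x; simp [mul_assoc]
      right_inv := fun f => by funext x; simp [mul_assoc]
      map_mul' := fun f g => rfl }
  map_one' := by ext f x; simp
  map_mul' c d := by ext f x; simp [MulEquiv.coe_mk, mul_assoc]

lemma translAct_apply (c : B) (f : B → A) (x : B) : translAct c f x = f (c⁻¹ * x) := rfl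

open scoped Classical in
/-- Delta function at `1` as a monoid hom. -/
noncomputable def deltaHom : A →* (B → A) where
  toFun a := fun x => if x = 1 then a else 1
  map_one' := by funext x; simp
  map_mul' a b := by funext x; by_cases h : x = 1 <;> simp [h]

open scoped Classical in
lemma deltaHom_apply {A B : Type*} [Group A] [Group B] (a : A) (x : B) :
    (deltaHom a : B → A) x = if x = 1 then a else 1 := rfl

end DehnAux

/-- Let `A` and `B` be groups with `A` nontrivial and `B` nonabelian
with trivial center, `F = A ∗ B` their free product, `w ∈ B` of infinite order, and
`D_w` the Dehn twist automorphism of `F` with `D_w (inl a) = (inr w) (inl a) (inr w)⁻¹`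
and `D_w (inr b) = inr b`.  If `Φ` is an automorphism of `F` with `Φ (inr w) = inr w`,
`Φ (inl a) ∈ ⟨A, w⟩` for all `a ∈ A`, and `Φ (inr b) ∈ B` for all `b ∈ B`, then the
image of `D_w` in `Out(F)` is an element of infinite order lying in the centralizer
of the image of `Φ` in `Out(F)`. -/
theorem dehn_twist_amalgam_centralizer_in_out
    {A B : Type*} [Group A] [Group B] [Nontrivial A]
    (hBnonab : ∃ x y : B, x * y ≠ y * x)
    (hBcenter : Subgroup.center B = ⊥)
    (w : B) (hw : ¬ IsOfFinOrder w)
    (D : MulAut (Monoid.Coprod A B))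
    (hDa : ∀ a : A, D (Coprod.inl a) =
      Coprod.inr w * Coprod.inl a * (Coprod.inr w : Monoid.Coprod A B)⁻¹)
    (hDb : ∀ b : B, D (Coprod.inr b) = Coprod.inr b)
    (Φ : MulAut (Monoid.Coprod A B))
    (hΦw : Φ (Coprod.inr w) = Coprod.inr w)
    (hΦa : ∀ a : A, Φ (Coprod.inl a) ∈ Subgroup.closure
      (Set.range (Coprod.inl : A →* Monoid.Coprod A B) ∪ {Coprod.inr w}))
    (hΦb : ∀ b : B, Φ (Coprod.inr b) ∈ (Coprod.inr : B →* Monoid.Coprod A B).range) :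
    ¬ IsOfFinOrder
        (QuotientGroup.mk' (MulAut.conj : Monoid.Coprod A B →* _).range D :
          OutAut (Monoid.Coprod A B)) ∧
      (QuotientGroup.mk' (MulAut.conj : Monoid.Coprod A B →* _).range D :
          OutAut (Monoid.Coprod A B)) ∈
        Subgroup.centralizer
          {(QuotientGroup.mk' (MulAut.conj : Monoid.Coprod A B →* _).range Φ :
            OutAut (Monoid.Coprod A B))} := by
  -- powers of D
  have hDkB : ∀ (k : ℕ) (b : B), (D ^ k) (Coprod.inr b) = Coprod.inr b := by
    intro k b
    induction k with
    | zero => rfl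
    | succ k ih =>
      rw [pow_succ', MulAut.mul_apply, ih, hDb]
  have hDkA : ∀ (k : ℕ) (a : A), (D ^ k) (Coprod.inl a) =
      (Coprod.inr w : Monoid.Coprod A B) ^ k * Coprod.inl a *
        ((Coprod.inr w : Monoid.Coprod A B) ^ k)⁻¹ := by
    intro k a
    induction k with
    | zero => simp
    | succ k ih =>
      rw [pow_succ', MulAut.mul_apply, ih, map_mul, map_mul, map_inv, map_pow, hDb, hDa]
      group
  constructor
  · -- infinite order
    intro hfin
    obtain ⟨n, hn, hpow⟩ := isOfFinOrder_iff_pow_eq_one.mp hfin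
    rw [← map_pow, QuotientGroup.mk'_apply, QuotientGroup.eq_one_iff] at hpow
    obtain ⟨g, hg⟩ := hpow
    have hconj : ∀ x : Monoid.Coprod A B, g * x * g⁻¹ = (D ^ n) x := by
      intro x
      have := DFunLike.congr_fun hg x
      simpa [MulAut.conj_apply] using this
    have hwn : w ^ n ≠ 1 := by
      intro h1
      exact hw (isOfFinOrder_iff_pow_eq_one.mpr ⟨n, hn, h1⟩)
    -- the wreath-type quotient
    set σ : Monoid.Coprod A B →* ((B → A) ⋊[translAct] B) :=
      Coprod.lift ((SemidirectProduct.inl : (B → A) →* ((B → A) ⋊[translAct] B)).comp deltaHom)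
        (SemidirectProduct.inr : B →* ((B → A) ⋊[translAct] B)) with hσ
    have hσl : ∀ a : A, σ (Coprod.inl a) = SemidirectProduct.inl (deltaHom a) := fun a => rfl
    have hσr : ∀ b : B, σ (Coprod.inr b) = SemidirectProduct.inr b := fun b => rfl
    -- g commutes with inr b, hence σ g commutes with inr b in G
    have hcomm : ∀ b : B, σ g * SemidirectProduct.inr b = SemidirectProduct.inr b * σ g := by
      intro b
      have h1 : g * Coprod.inr b = Coprod.inr b * g := by
        have h := hconj (Coprod.inr b)
        rw [hDkB, mul_inv_eq_iff_eq_mul] at h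
        exact h
      have := congrArg σ h1
      rw [map_mul, map_mul, hσr] at this
      exact this
    -- right component of σ g is central, hence 1
    have hc1 : (σ g).right = 1 := by
      have hcen : (σ g).right ∈ Subgroup.center B := by
        rw [Subgroup.mem_center_iff]
        intro b
        have := congrArg SemidirectProduct.right (hcomm b)
        simpa [SemidirectProduct.mul_right] using this.symm
      rwa [hBcenter, Subgroup.mem_bot] at hcen
    -- left component of σ g is constant
    have hfconst : ∀ x : B, (σ g).left x = (σ g).left 1 := by
      intro x
      have := congrArg SemidirectProduct.left (hcomm x)
      simp only [SemidirectProduct.mul_left, SemidirectProduct.left_inr,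
        SemidirectProduct.right_inr, hc1, map_one, MulAut.one_apply, mul_one,
        one_mul] at this
      -- this : (σ g).left = translAct x (σ g).left
      have h3 := congrFun this x
      rw [translAct_apply, inv_mul_cancel] at h3
      exact h3
    have hg_inl : σ g = SemidirectProduct.inl (σ g).left := by
      ext
      · simp
      · simp [hc1]
    -- apply the a-relation
    obtain ⟨a, ha⟩ := exists_ne (1 : A)
    have hA : g * Coprod.inl a * g⁻¹ =
        (Coprod.inr w : Monoid.Coprod A B) ^ n * Coprod.inl a *
          ((Coprod.inr w : Monoid.Coprod A B) ^ n)⁻¹ := by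
      rw [hconj, hDkA]
    have hσA := congrArg σ hA
    simp only [map_mul, map_inv, map_pow, hσl, hσr] at hσA
    rw [hg_inl, ← map_inv, ← map_mul, ← map_mul] at hσA
    have hrhs : (SemidirectProduct.inr w : (B → A) ⋊[translAct] B) ^ n *
        SemidirectProduct.inl (deltaHom a) *
        ((SemidirectProduct.inr w : (B → A) ⋊[translAct] B) ^ n)⁻¹ =
        SemidirectProduct.inl (translAct (w ^ n) (deltaHom a)) := by
      rw [← map_pow, SemidirectProduct.inl_aut, map_inv]
    rw [hrhs] at hσA
    have hleft := congrArg SemidirectProduct.left hσA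
    simp only [SemidirectProduct.left_inl] at hleft
    have heval := congrFun hleft 1
    have hne : ((w ^ n)⁻¹ * 1 : B) ≠ 1 := by
      simpa using inv_ne_one.mpr hwn
    rw [Pi.mul_apply, Pi.mul_apply, Pi.inv_apply, translAct_apply,
      deltaHom_apply, deltaHom_apply, if_pos rfl, if_neg hne,
      mul_inv_eq_iff_eq_mul, one_mul] at heval
    have : (σ g).left 1 * a = (σ g).left 1 * 1 := by rw [heval, mul_one]
    exact ha (mul_left_cancel this)
  ·
    have key : ∀ x : Monoid.Coprod A B, D (Φ x) = Φ (D x) := by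
      have : (D.toMonoidHom.comp Φ.toMonoidHom : Monoid.Coprod A B →* Monoid.Coprod A B) =
          Φ.toMonoidHom.comp D.toMonoidHom := by
        apply Coprod.hom_ext
        · ext a
          simp only [MonoidHom.comp_apply, MulEquiv.coe_toMonoidHom]
          -- goal : D (Φ (inl a)) = Φ (D (inl a))
          have hDy : D (Φ (Coprod.inl a)) =
              Coprod.inr w * Φ (Coprod.inl a) * (Coprod.inr w : Monoid.Coprod A B)⁻¹ := by
            refine Subgroup.closure_induction ?_ ?_ ?_ ?_ (hΦa a)
            · rintro x (⟨a', rfl⟩ | hx)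
              · exact hDa a'
              · rw [Set.mem_singleton_iff] at hx
                subst hx
                rw [hDb]
                group
            · simp
            · intro x y hx hy ihx ihy
              rw [map_mul, ihx, ihy]
              group
            · intro x hx ihx
              rw [map_inv, ihx]
              group
          rw [hDy, hDa, map_mul, map_mul, map_inv, hΦw]
        · ext b
          simp only [MonoidHom.comp_apply, MulEquiv.coe_toMonoidHom]
          obtain ⟨b', hb'⟩ := hΦb b
          rw [hDb, ← hb', hDb]
      intro x
      exact DFunLike.congr_fun this x
    have hcomm : D * Φ = Φ * D := by
      ext x
      exact key x
    rw [Subgroup.mem_centralizer_iff]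
    rintro y hy
    rw [Set.mem_singleton_iff] at hy
    subst hy
    rw [← map_mul, ← map_mul, hcomm]
end
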